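/- Let ϑ ∈ (0,1), α ∈ (0,1) and R₀ > 0, and set λ₀ := exp(exp(ϑ^(−1/α))) and ω(r) := ϑ^(−1) · [log(log(λ₀R₀/r))]^(−α) for r ∈ (0, R₀]. Define recursively R_{j+1} := exp(−(ϑ/α)·[ϑ·ω(R_j)]^(−1/α)) · R_j for j ∈ ℕ₀, starting from R₀. Then ω(R₀) = 1 and, for every j ∈ ℕ₀, ω(R_{j+1}) ≥ ω(R_j) · (1 − ϑ·exp(−[ϑ·ω(R_j)]^(−1/α))). -/

import Mathlib

/-!
With `a = log log (λ₀R₀/r)` one has `ϑ ω(r) = a^(−α)` and `(ϑ ω(r))^(−1/α) = a`, so one step of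
the recursion adds `(ϑ/α) a` to `log (λ₀R₀/r) = e^a`. Hence the next value is
`a' = log (e^a + (ϑ/α) a) ≤ a (1 + s)` with `s = (ϑ/α) e^(−a)`, and Bernoulli's inequality
`(1 + s)^(−α) ≥ 1 − α s = 1 − ϑ e^(−a)` gives the bound. The choice of `λ₀` makes `a = ϑ^(−1/α)`
at `r = R₀`, which is `ω(R₀) = 1`.
-/

/-- The modulus of continuity `ω(r) = ϑ⁻¹ [log(log(λ₀R₀/r))]^(−α)`
with `λ₀ = exp(exp(ϑ^(−1/α)))`. -/
noncomputable def omegaMod (ϑ α R₀ r : ℝ) : ℝ :=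
  ϑ⁻¹ * (Real.log (Real.log (Real.exp (Real.exp (ϑ ^ (-1 / α))) * R₀ / r))) ^ (-α)

open Real

theorem log_exp_add_le (a : ℝ) {b : ℝ} (hb : 0 < exp a + b) :
    log (exp a + b) ≤ a + b * exp (-a) := by
  rw [log_le_iff_le_exp hb, exp_add]
  calc exp a + b = exp a * (b * exp (-a) + 1) := by
        rw [exp_neg]; field_simp; ring
    _ ≤ exp a * exp (b * exp (-a)) := by gcongr; exact add_one_le_exp _

theorem one_sub_mul_le_one_add_rpow_neg {p s : ℝ} (hp : 0 ≤ p) (hs : -1 < s) :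
    1 - p * s ≤ (1 + s) ^ (-p) := by
  have hs' : 0 < 1 + s := by linarith
  calc 1 - p * s ≤ 1 - p * log (1 + s) := by
        gcongr; linarith [log_le_sub_one_of_pos hs']
    _ ≤ exp (log (1 + s) * -p) := by linarith [add_one_le_exp (log (1 + s) * -p)]
    _ = (1 + s) ^ (-p) := (rpow_def_of_pos hs' _).symm

theorem mul_one_sub_le_rpow_neg_log_exp_add_mul {a κ p : ℝ} (ha : 0 < a) (hκ : 0 ≤ κ)
    (hp : 0 ≤ p) : a ^ (-p) * (1 - p * κ * exp (-a)) ≤ log (exp a + κ * a) ^ (-p) := by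
  set s := κ * exp (-a)
  have hs : 0 ≤ s := by positivity
  have hlower : a ≤ log (exp a + κ * a) := by
    rw [le_log_iff_exp_le (by positivity)]; linarith [mul_nonneg hκ ha.le]
  have hupper : log (exp a + κ * a) ≤ a * (1 + s) := by
    have := log_exp_add_le a (b := κ * a) (by positivity)
    linarith
  calc a ^ (-p) * (1 - p * κ * exp (-a)) = a ^ (-p) * (1 - p * s) := by ring
    _ ≤ a ^ (-p) * (1 + s) ^ (-p) := by
        gcongr; exact one_sub_mul_le_one_add_rpow_neg hp (by linarith)
    _ = (a * (1 + s)) ^ (-p) := (mul_rpow ha.le (by linarith)).symm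
    _ ≤ log (exp a + κ * a) ^ (-p) :=
        rpow_le_rpow_of_nonpos (ha.trans_le hlower) hupper (by linarith)

-- `log (λ₀R₀/r)`, where `c` stands for `ϑ^(−1/α)`.
noncomputable def logRatio (c R₀ r : ℝ) : ℝ := log (exp (exp c) * R₀ / r)

theorem exp_le_logRatio (c : ℝ) {R₀ r : ℝ} (hr : 0 < r) (hrR : r ≤ R₀) :
    exp c ≤ logRatio c R₀ r := by
  rw [logRatio, le_log_iff_exp_le (by have := hr.trans_le hrR; positivity), mul_div_assoc]
  exact le_mul_of_one_le_right (exp_pos _).le ((one_le_div hr).2 hrR)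

theorem le_log_logRatio (c : ℝ) {R₀ r : ℝ} (hr : 0 < r) (hrR : r ≤ R₀) :
    c ≤ log (logRatio c R₀ r) :=
  (le_log_iff_exp_le ((exp_pos c).trans_le (exp_le_logRatio c hr hrR))).2
    (exp_le_logRatio c hr hrR)

theorem logRatio_self (c : ℝ) {R₀ : ℝ} (hR₀ : R₀ ≠ 0) : logRatio c R₀ R₀ = exp c := by
  rw [logRatio, mul_div_cancel_right₀ _ hR₀, log_exp]

theorem logRatio_exp_neg_mul (c t : ℝ) {R₀ r : ℝ} (hR₀ : R₀ ≠ 0) (hr : r ≠ 0) :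
    logRatio c R₀ (exp (-t) * r) = t + logRatio c R₀ r := by
  rw [logRatio, logRatio, ← log_exp t, ← log_mul (exp_ne_zero _) (by simp [hR₀, hr]), log_exp]
  congr 1; rw [exp_neg]; field_simp

theorem mul_omegaMod {ϑ : ℝ} (hϑ : ϑ ≠ 0) (α R₀ r : ℝ) :
    ϑ * omegaMod ϑ α R₀ r = log (logRatio (ϑ ^ (-1 / α)) R₀ r) ^ (-α) := by
  rw [omegaMod, logRatio, mul_inv_cancel_left₀ hϑ]

theorem omegaMod_self {ϑ α R₀ : ℝ} (hϑ : 0 < ϑ) (hα : α ≠ 0) (hR₀ : R₀ ≠ 0) :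
    omegaMod ϑ α R₀ R₀ = 1 := by
  have hexp : -1 / α * -α = 1 := by field_simp
  rw [← mul_right_inj' hϑ.ne', mul_omegaMod hϑ.ne', logRatio_self _ hR₀, log_exp,
    ← rpow_mul hϑ.le, hexp, rpow_one, mul_one]

theorem mul_omegaMod_rpow_neg_inv {ϑ α R₀ r : ℝ} (hϑ : 0 < ϑ) (hα : α ≠ 0) (hr : 0 < r)
    (hrR : r ≤ R₀) :
    (ϑ * omegaMod ϑ α R₀ r) ^ (-1 / α) = log (logRatio (ϑ ^ (-1 / α)) R₀ r) := by
  have hpos := (rpow_pos_of_pos hϑ (-1 / α)).trans_le (le_log_logRatio _ hr hrR)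
  have hexp : -α * (-1 / α) = 1 := by field_simp
  rw [mul_omegaMod hϑ.ne', ← rpow_mul hpos.le, hexp, rpow_one]

-- The map `R_j ↦ R_{j+1}`.
noncomputable def omegaStep (ϑ α R₀ r : ℝ) : ℝ :=
  exp (-(ϑ / α) * (ϑ * omegaMod ϑ α R₀ r) ^ (-1 / α)) * r

theorem omegaStep_eq {ϑ α R₀ r : ℝ} (hϑ : 0 < ϑ) (hα : α ≠ 0) (hr : 0 < r) (hrR : r ≤ R₀) :
    omegaStep ϑ α R₀ r = exp (-(ϑ / α * log (logRatio (ϑ ^ (-1 / α)) R₀ r))) * r := by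
  rw [omegaStep, mul_omegaMod_rpow_neg_inv hϑ hα hr hrR, neg_mul]

theorem omegaStep_mem_Ioc {ϑ α R₀ r : ℝ} (hϑ : 0 < ϑ) (hα : 0 < α) (hr : r ∈ Set.Ioc 0 R₀) :
    omegaStep ϑ α R₀ r ∈ Set.Ioc 0 R₀ := by
  obtain ⟨hr, hrR⟩ := hr
  have ha := (rpow_pos_of_pos hϑ (-1 / α)).trans_le (le_log_logRatio _ hr hrR)
  rw [omegaStep_eq hϑ hα.ne' hr hrR]
  refine ⟨by positivity, ?_⟩
  calc _ ≤ 1 * r := by gcongr; rw [exp_le_one_iff, neg_nonpos]; positivity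
    _ ≤ R₀ := by rwa [one_mul]

theorem omegaMod_mul_le_omegaMod_omegaStep {ϑ α R₀ r : ℝ} (hϑ : 0 < ϑ) (hα : 0 < α)
    (hr : r ∈ Set.Ioc 0 R₀) :
    omegaMod ϑ α R₀ r * (1 - ϑ * exp (-(ϑ * omegaMod ϑ α R₀ r) ^ (-1 / α))) ≤
      omegaMod ϑ α R₀ (omegaStep ϑ α R₀ r) := by
  obtain ⟨hr, hrR⟩ := hr
  set a := log (logRatio (ϑ ^ (-1 / α)) R₀ r)
  have ha : 0 < a := (rpow_pos_of_pos hϑ (-1 / α)).trans_le (le_log_logRatio _ hr hrR)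
  have hnext : log (logRatio (ϑ ^ (-1 / α)) R₀ (omegaStep ϑ α R₀ r)) =
      log (exp a + ϑ / α * a) := by
    have hL : exp a = logRatio (ϑ ^ (-1 / α)) R₀ r :=
      exp_log ((exp_pos _).trans_le (exp_le_logRatio _ hr hrR))
    rw [omegaStep_eq hϑ hα.ne' hr hrR, logRatio_exp_neg_mul _ _ (hr.trans_le hrR).ne' hr.ne',
      add_comm, ← hL, log_exp]
  rw [mul_omegaMod_rpow_neg_inv hϑ hα.ne' hr hrR, ← mul_le_mul_iff_of_pos_left hϑ, ← mul_assoc,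
    mul_omegaMod hϑ.ne', mul_omegaMod hϑ.ne', hnext]
  simpa only [mul_div_cancel₀ _ hα.ne'] using
    mul_one_sub_le_rpow_neg_log_exp_add_mul ha (div_pos hϑ hα).le hα.le

/-- Claim 4.2 of the paper: the sequence `ω_j := ω(R_j)` satisfies the recursive
lower bound `ω(R_{j+1}) ≥ ω(R_j)(1 − ϑ exp(−[ϑω(R_j)]^(−1/α)))`, together with the
normalization `ω(R₀) = 1`. -/
theorem omegaMod_recursive_lower_bound
    (ϑ α R₀ : ℝ) (hϑ : ϑ ∈ Set.Ioo (0 : ℝ) 1) (hα : α ∈ Set.Ioo (0 : ℝ) 1)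
    (hR₀ : 0 < R₀)
    (R : ℕ → ℝ) (hR0 : R 0 = R₀)
    (hRrec : ∀ j : ℕ,
      R (j + 1) = Real.exp (-(ϑ / α) * (ϑ * omegaMod ϑ α R₀ (R j)) ^ (-1 / α)) * R j) :
    omegaMod ϑ α R₀ (R 0) = 1 ∧
      ∀ j : ℕ,
        omegaMod ϑ α R₀ (R j) *
            (1 - ϑ * Real.exp (-(ϑ * omegaMod ϑ α R₀ (R j)) ^ (-1 / α))) ≤
          omegaMod ϑ α R₀ (R (j + 1)) := by
  obtain ⟨hϑ, -⟩ := hϑ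
  obtain ⟨hα, -⟩ := hα
  have hmem : ∀ j, R j ∈ Set.Ioc 0 R₀ := fun j => by
    induction j with
    | zero => rw [hR0]; exact ⟨hR₀, le_rfl⟩
    | succ j ih => exact hRrec j ▸ omegaStep_mem_Ioc hϑ hα ih
  refine ⟨by rw [hR0]; exact omegaMod_self hϑ hα.ne' hR₀.ne', fun j => ?_⟩
  rw [hRrec j]
  exact omegaMod_mul_le_omegaMod_omegaStep hϑ hα (hmem j)
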